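/- arXiv:1809.05745 — 2 statements merged into one kernel-verified Lean document; each statement's English description precedes it below -/
import Mathlib

section
/- Let a_1, ..., a_m be positive integers with a_1 + ... + a_m = 2B and let x > B. Consider the instance with m+2 flow-shop jobs of processing times x, x, a_1, ..., a_m and one open-shop job of processing time B + 2x. If this instance admits a feasible schedule with makespan at most 3B + 6x, then there exists a subset S_1 ⊆ {1, ..., m} with Σ_{i∈S_1} a_i = B. -/
open Finset

noncomputable section

/-- Processing time of a job: `p` on flow-shop jobs, `q` otherwise. -/
def jobTime {J : Type*} [DecidableEq J] (F : Finset J) (p q : J → ℝ) (j : J) : ℝ :=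
  if j ∈ F then p j else q j

/-- Feasibility of a schedule given by start times `S j i` of job `j` on machine `i`
(machines `M1, M2, M3` are machines `0, 1, 2`):
all start times are nonnegative, on each machine the open processing intervals of
distinct jobs are pairwise disjoint, for each job the open processing intervals on the
three machines are pairwise disjoint, and each flow-shop job goes through
`M1`, `M2`, `M3` in this order. -/
def Feasible {J : Type*} [DecidableEq J] (F O : Finset J) (p q : J → ℝ)
    (S : J → Fin 3 → ℝ) : Prop :=
  (∀ j ∈ F ∪ O, ∀ i : Fin 3, 0 ≤ S j i) ∧
  (∀ i : Fin 3, ∀ j ∈ F ∪ O, ∀ k ∈ F ∪ O, j ≠ k →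
    S j i + jobTime F p q j ≤ S k i ∨ S k i + jobTime F p q k ≤ S j i) ∧
  (∀ j ∈ F ∪ O, ∀ i i' : Fin 3, i ≠ i' →
    S j i + jobTime F p q j ≤ S j i' ∨ S j i' + jobTime F p q j ≤ S j i) ∧
  (∀ j ∈ F, S j 0 + p j ≤ S j 1 ∧ S j 1 + p j ≤ S j 2)

/-- Makespan: supremum of all completion times of the jobs of `F ∪ O`. -/
def makespan {J : Type*} [DecidableEq J] (F O : Finset J) (p q : J → ℝ)
    (S : J → Fin 3 → ℝ) : ℝ :=
  sSup {x : ℝ | ∃ j ∈ F ∪ O, ∃ i : Fin 3, x = S j i + jobTime F p q j}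

/-- The Partition-reduction instance: `m + 2` flow-shop jobs of processing times
`x, x, a 1, …, a m` and one open-shop job (the `Sum.inr` job) of processing time
`B + 2x`. -/
def redF (m : ℕ) : Finset ((Fin 2 ⊕ Fin m) ⊕ Unit) := Finset.univ.image Sum.inl

def redO (m : ℕ) : Finset ((Fin 2 ⊕ Fin m) ⊕ Unit) := {Sum.inr ()}

def redp (m : ℕ) (a : Fin m → ℕ) (x : ℝ) : ((Fin 2 ⊕ Fin m) ⊕ Unit) → ℝ :=
  Sum.elim (Sum.elim (fun _ => x) (fun i => (a i : ℝ))) (fun _ => 1)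

def redq (m B : ℕ) (x : ℝ) : ((Fin 2 ⊕ Fin m) ⊕ Unit) → ℝ :=
  fun _ => (B : ℝ) + 2 * x

/-!
Put `L = B + 2x`, so that the makespan bound is `3L`. The three operations of the open job have
length `L`, hence start at `0`, `L` and `2L`. If the one on machine 2 does not start at `L`, then
machine 1 or machine 3 has to fit the open job and all flow jobs, of total length `2x + 2B > L`,
into a window of length `2L`. If it starts at `L`, the flow jobs split into those run on
machines 1, 2 within `[0, L]` and those run on machines 2, 3 within `[2L, 3L]`. In a two-machine
proportionate flow shop the total processing time plus that of any single job is at most the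
length of the window, so each group contains exactly one job of length `x` and its remaining
jobs sum to at most `B`; as all the `a i` sum to `2B`, both groups sum to exactly `B`.
-/

open MeasureTheory in
lemma sum_le_of_pairwise_disjoint {ι : Type*} {s : Finset ι} {st len : ι → ℝ} {l u : ℝ}
    (hlu : l ≤ u) (hlen : ∀ i ∈ s, 0 ≤ len i) (hl : ∀ i ∈ s, l ≤ st i)
    (hu : ∀ i ∈ s, st i + len i ≤ u)
    (hdisj : (s : Set ι).Pairwise fun i j => st i + len i ≤ st j ∨ st j + len j ≤ st i) :
    ∑ i ∈ s, len i ≤ u - l := by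
  have hpd : (s : Set ι).PairwiseDisjoint fun i => Set.Ioo (st i) (st i + len i) := by
    intro i hi j hj hij
    rcases hdisj hi hj hij with h | h
    · exact Set.disjoint_left.mpr fun y hy hy' => (hy.2.trans_le h).not_gt hy'.1
    · exact Set.disjoint_left.mpr fun y hy hy' => (hy'.2.trans_le h).not_gt hy.1
  have hvol : ∑ i ∈ s, volume (Set.Ioo (st i) (st i + len i)) ≤ ENNReal.ofReal (u - l) := by
    rw [← measure_biUnion_finset hpd fun i _ => measurableSet_Ioo, ← Real.volume_Icc]
    exact measure_mono <| Set.iUnion₂_subset fun i hi =>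
      Set.Ioo_subset_Icc_self.trans (Set.Icc_subset_Icc (hl i hi) (hu i hi))
  simp only [Real.volume_Ioo, add_sub_cancel_left] at hvol
  rw [← ENNReal.ofReal_sum_of_nonneg hlen] at hvol
  exact (ENNReal.ofReal_le_ofReal_iff (sub_nonneg.mpr hlu)).mp hvol

lemma sum_add_le_of_pairwise_disjoint {ι : Type*} {s : Finset ι} {st len : ι → ℝ} {l u c d : ℝ}
    (hlen : ∀ i ∈ s, 0 ≤ len i) (hl : ∀ i ∈ s, l ≤ st i) (hu : ∀ i ∈ s, st i + len i ≤ u)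
    (hdisj : (s : Set ι).Pairwise fun i j => st i + len i ≤ st j ∨ st j + len j ≤ st i)
    (hlc : l ≤ c) (hdu : c + d ≤ u) (hcd : ∀ i ∈ s, st i + len i ≤ c ∨ c + d ≤ st i) :
    ∑ i ∈ s, len i + d ≤ u - l := by
  classical
  set P := s.filter fun i => st i + len i ≤ c
  set Q := s.filter fun i => ¬st i + len i ≤ c
  have hP : ∑ i ∈ P, len i ≤ c - l :=
    sum_le_of_pairwise_disjoint hlc (fun i hi => hlen i (mem_filter.mp hi).1)
      (fun i hi => hl i (mem_filter.mp hi).1) (fun i hi => (mem_filter.mp hi).2)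
      (hdisj.mono (coe_subset.mpr (filter_subset _ _)))
  have hQ : ∑ i ∈ Q, len i ≤ u - (c + d) :=
    sum_le_of_pairwise_disjoint hdu (fun i hi => hlen i (mem_filter.mp hi).1)
      (fun i hi => ((hcd i (mem_filter.mp hi).1).resolve_left (mem_filter.mp hi).2))
      (fun i hi => hu i (mem_filter.mp hi).1)
      (hdisj.mono (coe_subset.mpr (filter_subset _ _)))
  rw [← sum_filter_add_sum_filter_not s fun i => st i + len i ≤ c]
  linarith

lemma add_sum_le_of_twoMachineFlow {ι : Type*} [DecidableEq ι] {E : Finset ι}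
    {t s₁ s₂ : ι → ℝ} {l u : ℝ} (ht : ∀ k ∈ E, 0 ≤ t k) (hl : ∀ k ∈ E, l ≤ s₁ k)
    (hprec : ∀ k ∈ E, s₁ k + t k ≤ s₂ k) (hu : ∀ k ∈ E, s₂ k + t k ≤ u)
    (hdisj₁ : (E : Set ι).Pairwise fun j k => s₁ j + t j ≤ s₁ k ∨ s₁ k + t k ≤ s₁ j)
    (hdisj₂ : (E : Set ι).Pairwise fun j k => s₂ j + t j ≤ s₂ k ∨ s₂ k + t k ≤ s₂ j)
    {b : ι} (hb : b ∈ E) : t b + ∑ k ∈ E, t k ≤ u - l := by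
  -- Every other job passes the first machine either before `b` starts there, or after `b`
  -- finishes there; the latter then share the second machine with `b` after that time.
  set v := s₁ b
  set P := (E.erase b).filter fun k => s₁ k + t k ≤ v
  set Q := (E.erase b).filter fun k => ¬s₁ k + t k ≤ v
  have hP : ∀ k ∈ P, k ∈ E ∧ s₁ k + t k ≤ v := fun k hk => by
    obtain ⟨hk, hkv⟩ := mem_filter.mp hk
    exact ⟨mem_of_mem_erase hk, hkv⟩
  have hQ : ∀ k ∈ Q, k ∈ E ∧ k ≠ b ∧ v + t b ≤ s₁ k := fun k hk => by
    obtain ⟨hk, hkv⟩ := mem_filter.mp hk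
    obtain ⟨hkb, hkE⟩ := mem_erase.mp hk
    exact ⟨hkE, hkb, (hdisj₁ hkE hb hkb).resolve_left hkv⟩
  have hP_sum : ∑ k ∈ P, t k ≤ v - l :=
    sum_le_of_pairwise_disjoint (hl b hb) (fun k hk => ht k (hP k hk).1)
      (fun k hk => hl k (hP k hk).1) (fun k hk => (hP k hk).2)
      (hdisj₁.mono fun k hk => (hP k hk).1)
  have hQ_sum : ∑ k ∈ Q, t k + t b ≤ u - (v + t b) :=
    sum_add_le_of_pairwise_disjoint (fun k hk => ht k (hQ k hk).1)
      (fun k hk => by linarith [(hQ k hk).2.2, hprec k (hQ k hk).1, ht k (hQ k hk).1])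
      (fun k hk => hu k (hQ k hk).1) (hdisj₂.mono fun k hk => (hQ k hk).1)
      (hprec b hb) (hu b hb) (fun k hk => hdisj₂ (hQ k hk).1 hb (hQ k hk).2.1)
  rw [← add_sum_erase E t hb, ← sum_filter_add_sum_filter_not (E.erase b)
    fun k => s₁ k + t k ≤ v]
  linarith

/-- Flow-shop jobs `k` with processing times `t k` and start times `s k i`, together with one
open-shop job of processing time `L` and start times `o i`, all processed within `[0, 3L]`. -/
structure MixedSchedule {K : Type*} (t : K → ℝ) (s : K → Fin 3 → ℝ) (o : Fin 3 → ℝ)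
    (L : ℝ) : Prop where
  start_nonneg : ∀ k i, 0 ≤ s k i
  end_le : ∀ k i, s k i + t k ≤ 3 * L
  precedence_zero_one : ∀ k, s k 0 + t k ≤ s k 1
  precedence_one_two : ∀ k, s k 1 + t k ≤ s k 2
  flow_disjoint : ∀ i, Pairwise fun j k => s j i + t j ≤ s k i ∨ s k i + t k ≤ s j i
  open_nonneg : ∀ i, 0 ≤ o i
  open_end_le : ∀ i, o i + L ≤ 3 * L
  open_disjoint : ∀ i i', i ≠ i' → o i + L ≤ o i' ∨ o i' + L ≤ o i
  flow_open_disjoint : ∀ k i, s k i + t k ≤ o i ∨ o i + L ≤ s k i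

namespace MixedSchedule

variable {K : Type*} {t : K → ℝ} {s : K → Fin 3 → ℝ} {o : Fin 3 → ℝ} {L : ℝ}

lemma open_start_mem (hS : MixedSchedule t s o L) (i : Fin 3) :
    o i = 0 ∨ o i = L ∨ o i = 2 * L := by
  obtain ⟨j, k, hij, hik, hjk⟩ : ∃ j k : Fin 3, i ≠ j ∧ i ≠ k ∧ j ≠ k := by
    fin_cases i
    exacts [⟨1, 2, by decide⟩, ⟨0, 2, by decide⟩, ⟨0, 1, by decide⟩]
  have := hS.open_nonneg i
  have := hS.open_nonneg j
  have := hS.open_nonneg k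
  have := hS.open_end_le i
  have := hS.open_end_le j
  have := hS.open_end_le k
  rcases hS.open_disjoint i j hij with h₁ | h₁ <;> rcases hS.open_disjoint i k hik with h₂ | h₂ <;>
    rcases hS.open_disjoint j k hjk with h₃ | h₃
  all_goals first
    | (left; linarith) | (right; left; linarith) | (right; right; linarith)

variable [Fintype K]

lemma sum_add_le_of_window (hS : MixedSchedule t s o L) (ht : ∀ k, 0 ≤ t k) {i : Fin 3}
    {l u : ℝ} (hl : ∀ k, l ≤ s k i) (hu : ∀ k, s k i + t k ≤ u) (hol : l ≤ o i)
    (hou : o i + L ≤ u) : ∑ k, t k + L ≤ u - l :=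
  sum_add_le_of_pairwise_disjoint (fun k _ => ht k) (fun k _ => hl k) (fun k _ => hu k)
    (fun _ _ _ _ hjk => hS.flow_disjoint i hjk) hol hou (fun k _ => hS.flow_open_disjoint k i)

lemma sum_le_of_open_start_one_eq_zero (hS : MixedSchedule t s o L) (ht : ∀ k, 0 < t k)
    (h : o 1 = 0) : ∑ k, t k ≤ L := by
  have hM2 : ∀ k, L ≤ s k 1 := fun k => by
    rcases hS.flow_open_disjoint k 1 with hk | hk
    · linarith [hS.start_nonneg k 1, ht k]
    · linarith
  have hO3 : L ≤ o 2 := by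
    rcases hS.open_disjoint 1 2 (by decide) with h' | h'
    · linarith
    · linarith [hS.open_nonneg 2, hS.open_end_le 2]
  have := hS.sum_add_le_of_window (fun k => (ht k).le) (i := 2)
    (fun k => by linarith [hM2 k, hS.precedence_one_two k, ht k]) (fun k => hS.end_le k 2) hO3
    (hS.open_end_le 2)
  linarith

lemma sum_le_of_open_start_one_eq_two_mul (hS : MixedSchedule t s o L) (ht : ∀ k, 0 < t k)
    (h : o 1 = 2 * L) : ∑ k, t k ≤ L := by
  have hM2 : ∀ k, s k 1 + t k ≤ 2 * L := fun k => by
    rcases hS.flow_open_disjoint k 1 with hk | hk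
    · linarith
    · linarith [hS.end_le k 1, ht k]
  have hO1 : o 0 + L ≤ 2 * L := by
    rcases hS.open_disjoint 0 1 (by decide) with h' | h'
    · linarith
    · linarith [hS.open_nonneg 0, hS.open_end_le 0]
  have := hS.sum_add_le_of_window (fun k => (ht k).le) (i := 0) (fun k => hS.start_nonneg k 0)
    (fun k => by linarith [hM2 k, hS.precedence_zero_one k, ht k]) (hS.open_nonneg 0) hO1
  linarith

lemma exists_split_of_open_start_one_eq [DecidableEq K] (hS : MixedSchedule t s o L)
    (ht : ∀ k, 0 ≤ t k) (h : o 1 = L) : ∃ E : Finset K, (∀ b ∈ E, t b + ∑ k ∈ E, t k ≤ L) ∧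
      ∀ b ∈ Eᶜ, t b + ∑ k ∈ Eᶜ, t k ≤ L := by
  refine ⟨univ.filter fun k => s k 1 + t k ≤ L, fun b hb => ?_, fun b hb => ?_⟩
  · have := add_sum_le_of_twoMachineFlow (fun k _ => ht k) (fun k _ => hS.start_nonneg k 0)
      (fun k _ => hS.precedence_zero_one k) (fun k hk => (mem_filter.mp hk).2)
      (fun _ _ _ _ hjk => hS.flow_disjoint 0 hjk) (fun _ _ _ _ hjk => hS.flow_disjoint 1 hjk) hb
    linarith
  · have hlate : ∀ k ∈ (univ.filter fun k => s k 1 + t k ≤ L)ᶜ, 2 * L ≤ s k 1 := fun k hk => by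
      rw [mem_compl, mem_filter] at hk
      rcases hS.flow_open_disjoint k 1 with hk' | hk'
      · exact absurd ⟨mem_univ k, h ▸ hk'⟩ hk
      · linarith
    have := add_sum_le_of_twoMachineFlow (fun k _ => ht k) hlate
      (fun k _ => hS.precedence_one_two k) (fun k _ => hS.end_le k 2)
      (fun _ _ _ _ hjk => hS.flow_disjoint 1 hjk) (fun _ _ _ _ hjk => hS.flow_disjoint 2 hjk) hb
    linarith

end MixedSchedule

lemma add_jobTime_le_makespan {J : Type*} [DecidableEq J] {F O : Finset J} {p q : J → ℝ}
    {S : J → Fin 3 → ℝ} {j : J} (hj : j ∈ F ∪ O) (i : Fin 3) :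
    S j i + jobTime F p q j ≤ makespan F O p q S := by
  refine le_csSup ?_ ⟨j, hj, i, rfl⟩
  refine (((F ∪ O) ×ˢ (univ : Finset (Fin 3))).image
    fun ji => S ji.1 ji.2 + jobTime F p q ji.1).finite_toSet.bddAbove.mono ?_
  rintro _ ⟨j, hj, i, rfl⟩
  exact mem_image.mpr ⟨(j, i), mem_product.mpr ⟨hj, mem_univ i⟩, rfl⟩

section Reduction

variable {m B : ℕ} {a : Fin m → ℕ} {x : ℝ}

lemma sum_redp_inl (D : Finset (Fin 2 ⊕ Fin m)) :
    ∑ k ∈ D, redp m a x (.inl k) = #D.toLeft * x + ∑ i ∈ D.toRight, (a i : ℝ) := by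
  simp [sum_sum_eq_sum_toLeft_add_sum_toRight, redp]

lemma card_toLeft_eq_one_of_add_sum_le (hx : (B : ℝ) < x) {D : Finset (Fin 2 ⊕ Fin m)}
    (hD : ∀ b ∈ D, redp m a x (.inl b) + ∑ k ∈ D, redp m a x (.inl k) ≤ B + 2 * x)
    (hD0 : #D.toLeft ≠ 0) : #D.toLeft = 1 ∧ ∑ i ∈ D.toRight, a i ≤ B := by
  obtain ⟨b, hb⟩ := card_ne_zero.mp hD0
  have h := hD (.inl b) (mem_toLeft.mp hb)
  rw [sum_redp_inl] at h
  simp only [redp, Sum.elim_inl] at h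
  have hrest : (0 : ℝ) ≤ ∑ i ∈ D.toRight, (a i : ℝ) := by positivity
  have hone : #D.toLeft = 1 := by
    by_contra! h1
    have : (2 : ℝ) ≤ #D.toLeft := by exact_mod_cast (show 2 ≤ #D.toLeft by omega)
    nlinarith
  refine ⟨hone, ?_⟩
  rw [hone, Nat.cast_one] at h
  exact_mod_cast (show ((∑ i ∈ D.toRight, a i : ℕ) : ℝ) ≤ B by push_cast; linarith)

lemma sum_toRight_eq_of_split (hx : (B : ℝ) < x) (hsum : ∑ i, a i = 2 * B)
    {E : Finset (Fin 2 ⊕ Fin m)}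
    (hE : ∀ b ∈ E, redp m a x (.inl b) + ∑ k ∈ E, redp m a x (.inl k) ≤ B + 2 * x)
    (hEc : ∀ b ∈ Eᶜ, redp m a x (.inl b) + ∑ k ∈ Eᶜ, redp m a x (.inl k) ≤ B + 2 * x) :
    ∑ i ∈ E.toRight, a i = B := by
  have hcard : #E.toLeft + #Eᶜ.toLeft = 2 := by
    have : Eᶜ.toLeft = E.toLeftᶜ := by ext; simp
    rw [this, card_add_card_compl, Fintype.card_fin]
  have hsplit : ∑ i ∈ E.toRight, a i + ∑ i ∈ Eᶜ.toRight, a i = 2 * B := by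
    have : Eᶜ.toRight = E.toRightᶜ := by ext; simp
    rw [this, sum_add_sum_compl, hsum]
  by_cases h0 : #E.toLeft = 0
  · have := (card_toLeft_eq_one_of_add_sum_le hx hEc (by omega)).1
    omega
  by_cases h0' : #Eᶜ.toLeft = 0
  · have := (card_toLeft_eq_one_of_add_sum_le hx hE h0).1
    omega
  have := (card_toLeft_eq_one_of_add_sum_le hx hE h0).2
  have := (card_toLeft_eq_one_of_add_sum_le hx hEc h0').2
  omega

lemma sum_redp_inl_univ (hsum : ∑ i, a i = 2 * B) :
    ∑ k, redp m a x (.inl k) = 2 * x + 2 * B := by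
  rw [sum_redp_inl, toRight_univ, ← Nat.cast_sum, hsum]
  simp

lemma mem_redF_union_redO (j : (Fin 2 ⊕ Fin m) ⊕ Unit) : j ∈ redF m ∪ redO m := by
  rcases j with k | ⟨⟩ <;> simp [redF, redO]

lemma jobTime_redF_inl (q : (Fin 2 ⊕ Fin m) ⊕ Unit → ℝ) (k : Fin 2 ⊕ Fin m) :
    jobTime (redF m) (redp m a x) q (.inl k) = redp m a x (.inl k) :=
  if_pos (by simp [redF])

lemma jobTime_redF_inr (p : (Fin 2 ⊕ Fin m) ⊕ Unit → ℝ) :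
    jobTime (redF m) p (redq m B x) (.inr ()) = B + 2 * x :=
  if_neg (by simp [redF])

lemma MixedSchedule.of_feasible {S : (Fin 2 ⊕ Fin m) ⊕ Unit → Fin 3 → ℝ}
    (hfeas : Feasible (redF m) (redO m) (redp m a x) (redq m B x) S)
    (hmk : makespan (redF m) (redO m) (redp m a x) (redq m B x) S ≤ 3 * (B : ℝ) + 6 * x) :
    MixedSchedule (fun k => redp m a x (.inl k)) (fun k => S (.inl k)) (S (.inr ()))
      (B + 2 * x) := by
  obtain ⟨hnonneg, hmachine, hjob, hflow⟩ := hfeas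
  have hend : ∀ j i, S j i + jobTime (redF m) (redp m a x) (redq m B x) j ≤ 3 * (B + 2 * x) :=
    fun j i => (add_jobTime_le_makespan (mem_redF_union_redO j) i).trans (by linarith)
  have hF : ∀ k, Sum.inl k ∈ redF m := fun k => by simp [redF]
  refine
    { start_nonneg := fun k i => hnonneg _ (mem_redF_union_redO _) i
      end_le := fun k i => by simpa only [jobTime_redF_inl] using hend (.inl k) i
      precedence_zero_one := fun k => (hflow _ (hF k)).1
      precedence_one_two := fun k => (hflow _ (hF k)).2
      flow_disjoint := fun i j k hjk => by
        simpa only [jobTime_redF_inl] using hmachine i _ (mem_redF_union_redO (.inl j)) _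
          (mem_redF_union_redO (.inl k)) (Sum.inl_injective.ne hjk)
      open_nonneg := hnonneg _ (mem_redF_union_redO _)
      open_end_le := fun i => by simpa only [jobTime_redF_inr] using hend (.inr ()) i
      open_disjoint := fun i i' hii' => by
        simpa only [jobTime_redF_inr] using hjob _ (mem_redF_union_redO (.inr ())) i i' hii'
      flow_open_disjoint := fun k i => by
        simpa only [jobTime_redF_inl, jobTime_redF_inr] using hmachine i _
          (mem_redF_union_redO (.inl k)) _ (mem_redF_union_redO (.inr ())) Sum.inl_ne_inr }

end Reduction

/-- Backward direction of the reduction from Partition: if the reduction instance has a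
feasible schedule of makespan at most `3B + 6x`, then some subset of the `a i` sums to
`B`. -/
theorem stmt13 (m B : ℕ) (a : Fin m → ℕ) (ha : ∀ i, 0 < a i)
    (hsum : ∑ i, a i = 2 * B) (x : ℝ) (hx : (B : ℝ) < x)
    (S : ((Fin 2 ⊕ Fin m) ⊕ Unit) → Fin 3 → ℝ)
    (hfeas : Feasible (redF m) (redO m) (redp m a x) (redq m B x) S)
    (hmk : makespan (redF m) (redO m) (redp m a x) (redq m B x) S
        ≤ 3 * (B : ℝ) + 6 * x) :
    ∃ S1 : Finset (Fin m), ∑ i ∈ S1, a i = B := by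
  have hS := MixedSchedule.of_feasible hfeas hmk
  have hpos : ∀ k, 0 < redp m a x (.inl k) := by
    rintro (b | i)
    · exact (Nat.cast_nonneg B).trans_lt hx
    · exact Nat.cast_pos.mpr (ha i)
  have hload := sum_redp_inl_univ (x := x) hsum
  -- If the open job is not in the middle of machine 2, some machine is overloaded unless `B = 0`.
  have hB : ∑ k, redp m a x (.inl k) ≤ B + 2 * x → ∃ S1 : Finset (Fin m), ∑ i ∈ S1, a i = B := by
    intro h
    have hB0 : B = 0 := by exact_mod_cast (show (B : ℝ) ≤ 0 by linarith).antisymm B.cast_nonneg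
    exact ⟨∅, by simp [hB0]⟩
  rcases hS.open_start_mem 1 with h | h | h
  · exact hB (hS.sum_le_of_open_start_one_eq_zero hpos h)
  · obtain ⟨E, hE, hEc⟩ := hS.exists_split_of_open_start_one_eq (fun k => (hpos k).le) h
    exact ⟨E.toRight, sum_toRight_eq_of_split hx hsum hE hEc⟩
  · exact hB (hS.sum_le_of_open_start_one_eq_two_mul hpos h)
end
end

section
/- Suppose F is nonempty and O = {J_n} consists of a single open-shop job with processing time q_n, and P(F) ≤ q_n. Then there exists a feasible schedule with makespan exactly 3·q_n, and every feasible schedule has makespan at least 3·q_n; hence the optimal makespan equals 3·q_n. -/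
open Finset

noncomputable section

/-!
In a feasible schedule the three operations of `jn` occupy pairwise disjoint intervals of
length `q jn` in `[0, ∞)`, so one of them starts at `2 * q jn` or later and the makespan is at
least `3 * q jn`. Conversely, cut `[0, 3 * q jn]` into three blocks of length `q jn`: the open
job runs on `M2`, `M3`, `M1` in the successive blocks, and the flow jobs, sequenced back to
back, run on `M1`, `M2`, `M3` in them; they fit into a block because `P(F) ≤ q jn`.
-/

lemma forall_fin_three {P : Fin 3 → Prop} : (∀ i, P i) ↔ P 0 ∧ P 1 ∧ P 2 :=
  ⟨fun h => ⟨h 0, h 1, h 2⟩, fun ⟨h0, h1, h2⟩ i => by fin_cases i <;> assumption⟩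

lemma pairwise_vecCons_three {α : Type*} {R : α → α → Prop} (hR : ∀ a b, R a b → R b a)
    {x y z : α} (hxy : R x y) (hxz : R x z) (hyz : R y z) :
    Pairwise fun i i' => R (![x, y, z] i) (![x, y, z] i') := by
  simp only [Pairwise, forall_fin_three, Matrix.cons_val, ne_eq, Fin.reduceEq, not_true_eq_false,
    not_false_eq_true, false_imp_iff, forall_const, true_and, and_true]
  exact ⟨⟨hxy, hxz⟩, ⟨hR _ _ hxy, hyz⟩, hR _ _ hxz, hR _ _ hyz⟩

section Schedule

variable {J : Type*} [DecidableEq J] {F O : Finset J} {p q : J → ℝ}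

lemma jobTime_of_mem {j : J} (hj : j ∈ F) : jobTime F p q j = p j :=
  if_pos hj

lemma jobTime_of_notMem {j : J} (hj : j ∉ F) : jobTime F p q j = q j :=
  if_neg hj

lemma le_makespan (S : J → Fin 3 → ℝ) {j : J} (hj : j ∈ F ∪ O) (i : Fin 3) :
    S j i + jobTime F p q j ≤ makespan F O p q S := by
  have hfin : {x : ℝ | ∃ j ∈ F ∪ O, ∃ i : Fin 3, x = S j i + jobTime F p q j}.Finite := by
    refine (((F ∪ O) ×ˢ (univ : Finset (Fin 3))).image
      fun x => S x.1 x.2 + jobTime F p q x.1).finite_toSet.subset ?_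
    rintro x ⟨j, hj, i, rfl⟩
    exact mem_coe.2 (mem_image.2 ⟨(j, i), mem_product.2 ⟨hj, mem_univ i⟩, rfl⟩)
  exact le_csSup hfin.bddAbove ⟨j, hj, i, rfl⟩

lemma makespan_eq_of_forall_le {S : J → Fin 3 → ℝ} {M : ℝ}
    (hle : ∀ j ∈ F ∪ O, ∀ i, S j i + jobTime F p q j ≤ M)
    {j : J} (hj : j ∈ F ∪ O) {i : Fin 3} (hM : S j i + jobTime F p q j = M) :
    makespan F O p q S = M :=
  le_antisymm (csSup_le ⟨_, j, hj, i, rfl⟩ fun _ ⟨k, hk, i', hx⟩ => hx ▸ hle k hk i')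
    (hM ▸ le_makespan S hj i)

lemma exists_two_mul_le_of_pairwise_disjoint {t : ℝ} {a : Fin 3 → ℝ} (h0 : ∀ i, 0 ≤ a i)
    (hdisj : Pairwise fun i i' => a i + t ≤ a i' ∨ a i' + t ≤ a i) :
    ∃ i, 2 * t ≤ a i := by
  have := h0 0; have := h0 1; have := h0 2
  rcases @hdisj 0 1 (by decide) with _ | _ <;>
    rcases @hdisj 0 2 (by decide) with _ | _ <;>
    rcases @hdisj 1 2 (by decide) with _ | _ <;>
    first
      | exact ⟨0, by linarith⟩
      | exact ⟨1, by linarith⟩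
      | exact ⟨2, by linarith⟩

lemma three_mul_jobTime_le_makespan {S : J → Fin 3 → ℝ} (hS : Feasible F O p q S) {j : J}
    (hj : j ∈ F ∪ O) : 3 * jobTime F p q j ≤ makespan F O p q S := by
  obtain ⟨i, hi⟩ := exists_two_mul_le_of_pairwise_disjoint (hS.1 j hj) (hS.2.2.1 j hj)
  linarith [le_makespan (p := p) (q := q) S hj i]

end Schedule

lemma exists_sequential_offsets {J : Type*} [DecidableEq J] (F : Finset J) (p : J → ℝ)
    (hp : ∀ j ∈ F, 0 ≤ p j) :
    ∃ σ : J → ℝ, (∀ j ∈ F, 0 ≤ σ j ∧ σ j + p j ≤ ∑ k ∈ F, p k) ∧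
      ∀ j ∈ F, ∀ k ∈ F, j ≠ k → σ j + p j ≤ σ k ∨ σ k + p k ≤ σ j := by
  induction F using Finset.induction_on with
  | empty => exact ⟨0, by simp, by simp⟩
  | insert a s ha ih =>
    obtain ⟨σ, hσ, hdisj⟩ := ih fun j hj => hp j (mem_insert_of_mem hj)
    have hs : 0 ≤ ∑ k ∈ s, p k := sum_nonneg fun j hj => hp j (mem_insert_of_mem hj)
    refine ⟨Function.update σ a (∑ k ∈ s, p k), ?_, ?_⟩
    · intro j hj
      rw [sum_insert ha]
      rcases mem_insert.1 hj with rfl | hj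
      · simp only [Function.update_self]
        exact ⟨hs, by linarith⟩
      · rw [Function.update_of_ne (ne_of_mem_of_not_mem hj ha)]
        exact ⟨(hσ j hj).1, by linarith [(hσ j hj).2, hp a (mem_insert_self a s)]⟩
    · intro j hj k hk hjk
      rcases mem_insert.1 hj with rfl | hjs <;> rcases mem_insert.1 hk with rfl | hks
      · exact absurd rfl hjk
      · rw [Function.update_self, Function.update_of_ne (ne_of_mem_of_not_mem hks ha)]
        exact Or.inr (hσ k hks).2
      · rw [Function.update_self, Function.update_of_ne (ne_of_mem_of_not_mem hjs ha)]
        exact Or.inl (hσ j hjs).2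
      · rw [Function.update_of_ne (ne_of_mem_of_not_mem hjs ha),
          Function.update_of_ne (ne_of_mem_of_not_mem hks ha)]
        exact hdisj j hjs k hks hjk

section BlockSchedule

variable {J : Type*} [DecidableEq J] {F : Finset J} {jn : J} {p q σ : J → ℝ}

def blockSchedule (jn : J) (t : ℝ) (σ : J → ℝ) (j : J) : Fin 3 → ℝ :=
  if j = jn then ![2 * t, 0, t] else ![σ j, t + σ j, 2 * t + σ j]

lemma blockSchedule_self (t : ℝ) : blockSchedule jn t σ jn = ![2 * t, 0, t] :=
  if_pos rfl

lemma blockSchedule_of_ne {j : J} (t : ℝ) (h : j ≠ jn) :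
    blockSchedule jn t σ j = ![σ j, t + σ j, 2 * t + σ j] :=
  if_neg h

lemma blockSchedule_machine_disjoint (hjn : jn ∉ F) (ht : 0 ≤ q jn)
    (hσ : ∀ j ∈ F, 0 ≤ σ j ∧ σ j + p j ≤ q jn)
    (hσdisj : ∀ j ∈ F, ∀ k ∈ F, j ≠ k → σ j + p j ≤ σ k ∨ σ k + p k ≤ σ j)
    (i : Fin 3) {j k : J} (hj : j ∈ F ∪ {jn}) (hk : k ∈ F ∪ {jn}) (hjk : j ≠ k) :
    blockSchedule jn (q jn) σ j i + jobTime F p q j ≤ blockSchedule jn (q jn) σ k i ∨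
      blockSchedule jn (q jn) σ k i + jobTime F p q k ≤ blockSchedule jn (q jn) σ j i := by
  have hflow_flow : ∀ j ∈ F, ∀ k ∈ F, j ≠ k → ∀ i,
      blockSchedule jn (q jn) σ j i + jobTime F p q j ≤ blockSchedule jn (q jn) σ k i ∨
        blockSchedule jn (q jn) σ k i + jobTime F p q k ≤ blockSchedule jn (q jn) σ j i := by
    intro j hj k hk hjk
    have h := hσdisj j hj k hk hjk
    simp only [forall_fin_three, blockSchedule_of_ne _ (ne_of_mem_of_not_mem hj hjn),
      blockSchedule_of_ne _ (ne_of_mem_of_not_mem hk hjn), jobTime_of_mem hj,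
      jobTime_of_mem hk, Matrix.cons_val, add_assoc, add_le_add_iff_left]
    exact ⟨h, h, h⟩
  have hopen_flow : ∀ k ∈ F, ∀ i,
      blockSchedule jn (q jn) σ jn i + jobTime F p q jn ≤ blockSchedule jn (q jn) σ k i ∨
        blockSchedule jn (q jn) σ k i + jobTime F p q k ≤ blockSchedule jn (q jn) σ jn i := by
    intro k hk
    obtain ⟨h0, hle⟩ := hσ k hk
    simp only [forall_fin_three, blockSchedule_self,
      blockSchedule_of_ne _ (ne_of_mem_of_not_mem hk hjn), jobTime_of_mem hk,
      jobTime_of_notMem hjn, Matrix.cons_val]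
    exact ⟨Or.inr (by linarith), Or.inl (by linarith), Or.inl (by linarith)⟩
  rcases mem_union.1 hj with hjF | hj <;> rcases mem_union.1 hk with hkF | hk
  · exact hflow_flow j hjF k hkF hjk i
  · rw [mem_singleton.1 hk]
    exact (hopen_flow j hjF i).symm
  · rw [mem_singleton.1 hj]
    exact hopen_flow k hkF i
  · exact absurd ((mem_singleton.1 hj).trans (mem_singleton.1 hk).symm) hjk

lemma feasible_blockSchedule (hjn : jn ∉ F) (ht : 0 ≤ q jn)
    (hσ : ∀ j ∈ F, 0 ≤ σ j ∧ σ j + p j ≤ q jn)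
    (hσdisj : ∀ j ∈ F, ∀ k ∈ F, j ≠ k → σ j + p j ≤ σ k ∨ σ k + p k ≤ σ j) :
    Feasible F {jn} p q (blockSchedule jn (q jn) σ) := by
  have hopen := blockSchedule_self (jn := jn) (q jn) (σ := σ)
  have hflow : ∀ j ∈ F, blockSchedule jn (q jn) σ j = ![σ j, q jn + σ j, 2 * q jn + σ j] :=
    fun j hj => blockSchedule_of_ne _ (ne_of_mem_of_not_mem hj hjn)
  refine ⟨fun j hj => ?_, fun i j hj k hk hjk =>
    blockSchedule_machine_disjoint hjn ht hσ hσdisj i hj hk hjk, fun j hj => ?_, fun j hj => ?_⟩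
  · rcases mem_union.1 hj with hj | hj
    · obtain ⟨h0, -⟩ := hσ j hj
      simp only [hflow j hj, forall_fin_three, Matrix.cons_val]
      exact ⟨by linarith, by linarith, by linarith⟩
    · obtain rfl := mem_singleton.1 hj
      simp only [hopen, forall_fin_three, Matrix.cons_val]
      exact ⟨by linarith, le_rfl, ht⟩
  · rcases mem_union.1 hj with hj | hj
    · obtain ⟨h0, hle⟩ := hσ j hj
      rw [hflow j hj, jobTime_of_mem hj]
      exact pairwise_vecCons_three (R := fun a b => a + p j ≤ b ∨ b + p j ≤ a)
        (fun _ _ => Or.symm) (Or.inl (by linarith)) (Or.inl (by linarith)) (Or.inl (by linarith))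
    · obtain rfl := mem_singleton.1 hj
      rw [hopen, jobTime_of_notMem hjn]
      exact pairwise_vecCons_three (R := fun a b => a + q j ≤ b ∨ b + q j ≤ a)
        (fun _ _ => Or.symm) (Or.inr (by linarith)) (Or.inr (by linarith)) (Or.inl (by linarith))
  · obtain ⟨h0, hle⟩ := hσ j hj
    simp only [hflow j hj, Matrix.cons_val]
    constructor <;> linarith

lemma makespan_blockSchedule (hjn : jn ∉ F) (ht : 0 ≤ q jn)
    (hσ : ∀ j ∈ F, σ j + p j ≤ q jn) :
    makespan F {jn} p q (blockSchedule jn (q jn) σ) = 3 * q jn := by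
  refine makespan_eq_of_forall_le (fun j hj => ?_) (mem_union_right F (mem_singleton_self jn))
    (i := 0) ?_
  · rcases mem_union.1 hj with hj | hj
    · have hle := hσ j hj
      simp only [forall_fin_three, blockSchedule_of_ne _ (ne_of_mem_of_not_mem hj hjn),
        jobTime_of_mem hj, Matrix.cons_val]
      exact ⟨by linarith, by linarith, by linarith⟩
    · rw [mem_singleton.1 hj]
      simp only [forall_fin_three, blockSchedule_self, jobTime_of_notMem hjn, Matrix.cons_val]
      exact ⟨by linarith, by linarith, by linarith⟩
  · simp only [blockSchedule_self, jobTime_of_notMem hjn, Matrix.cons_val]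
    ring

end BlockSchedule

theorem stmt14_general {J : Type*} [DecidableEq J] (F : Finset J) (jn : J) (p q : J → ℝ)
    (hdisj : Disjoint F {jn})
    (hp : ∀ j ∈ F, 0 < p j) (hq : 0 < q jn)
    (hPF : (∑ j ∈ F, p j) ≤ q jn) :
    (∃ S : J → Fin 3 → ℝ, Feasible F {jn} p q S ∧
        makespan F {jn} p q S = 3 * q jn) ∧
    (∀ S : J → Fin 3 → ℝ, Feasible F {jn} p q S →
        3 * q jn ≤ makespan F {jn} p q S) := by
  have hjn : jn ∉ F := disjoint_singleton_right.mp hdisj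
  obtain ⟨σ, hσ, hσdisj⟩ := exists_sequential_offsets F p fun j hj => (hp j hj).le
  have hσq : ∀ j ∈ F, 0 ≤ σ j ∧ σ j + p j ≤ q jn :=
    fun j hj => ⟨(hσ j hj).1, (hσ j hj).2.trans hPF⟩
  refine ⟨⟨blockSchedule jn (q jn) σ, feasible_blockSchedule hjn hq.le hσq hσdisj,
    makespan_blockSchedule hjn hq.le fun j hj => (hσq j hj).2⟩, fun S hS => ?_⟩
  simpa only [jobTime_of_notMem hjn] using
    three_mul_jobTime_le_makespan hS (mem_union_right F (mem_singleton_self jn))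

/-- Lemma 6.1: if `O = {jn}` and `P(F) ≤ q_n`, then there is a feasible schedule of
makespan exactly `3 q_n`, every feasible schedule has makespan at least `3 q_n`,
and hence the optimal makespan equals `3 q_n`. -/
theorem stmt14 {J : Type*} [DecidableEq J] (F : Finset J) (jn : J) (p q : J → ℝ)
    (hdisj : Disjoint F {jn})
    (hp : ∀ j ∈ F, 0 < p j) (hq : 0 < q jn)
    (hF : F.Nonempty)
    (hPF : (∑ j ∈ F, p j) ≤ q jn) :
    (∃ S : J → Fin 3 → ℝ, Feasible F {jn} p q S ∧
        makespan F {jn} p q S = 3 * q jn) ∧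
    (∀ S : J → Fin 3 → ℝ, Feasible F {jn} p q S →
        3 * q jn ≤ makespan F {jn} p q S) :=
  stmt14_general F jn p q hdisj hp hq hPF
end
end
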